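/- For all real z with |z| < 1, the identity π·z / (2·√(1−z²)) = Σ_{m=0}^∞ (2z)^{2m+1} / (binom(2m+1, m+1/2) · (2m+1)) holds, where binom(2m+1, m+1/2) := Γ(2m+2)/Γ(m+3/2)². -/

import Mathlib

/-!
Legendre's duplication formula gives `Γ(m + 3/2) = (2m+1)! √π / (m! 2^(2m+1))`, which turns the
`m`-th term into `(π z / 2) · (C(2m, m) / 4^m) · z^(2m)`. The claim is then the binomial series
`(1 - x)^(-1/2) = ∑ C(2m, m) / 4^m · x^m` at `x = z²`: its coefficients
`(1/2)(3/2)⋯(m - 1/2) / m!` are exactly `C(2m, m) / 4^m`.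
-/

/-- The half-integer binomial coefficient `binom(2m+1, m+1/2) = Γ(2m+2)/Γ(m+3/2)²`. -/
noncomputable def halfBinom (m : ℕ) : ℝ :=
  Real.Gamma (2 * m + 2) / (Real.Gamma ((m : ℝ) + 3 / 2)) ^ 2

open Real

theorem Nat.centralBinom_mul_factorial_mul_factorial (n : ℕ) :
    n.centralBinom * n.factorial * n.factorial = (2 * n).factorial := by
  have h := Nat.choose_mul_factorial_mul_factorial (n := 2 * n) (k := n) (by omega)
  rwa [show 2 * n - n = n by omega, ← Nat.centralBinom_eq_two_mul_choose] at h

namespace Ring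

variable {K : Type*} [Field K] [CharZero K]

theorem natCast_add_one_mul_multichoose_succ (r : K) (n : ℕ) :
    ((n : K) + 1) * multichoose r (n + 1) = (r + n) * multichoose r n := by
  have h := factorial_nsmul_multichoose_eq_ascPochhammer r (n + 1)
  have h' := factorial_nsmul_multichoose_eq_ascPochhammer r n
  rw [Polynomial.ascPochhammer_smeval_eq_eval] at h h'
  rw [ascPochhammer_succ_eval] at h
  simp only [nsmul_eq_mul, Nat.factorial_succ, Nat.cast_mul] at h h'
  apply mul_left_cancel₀ (Nat.cast_ne_zero.mpr n.factorial_ne_zero : (n.factorial : K) ≠ 0)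
  push_cast at h
  linear_combination h - (r + n) * h'

theorem multichoose_half_eq_centralBinom_div (n : ℕ) :
    multichoose (1 / 2 : K) n = n.centralBinom / 4 ^ n := by
  induction n with
  | zero => simp
  | succ n ih =>
    have hrec := natCast_add_one_mul_multichoose_succ (1 / 2 : K) n
    have hcb : ((n : K) + 1) * (n + 1).centralBinom = 2 * (2 * n + 1) * n.centralBinom := by
      exact_mod_cast n.succ_mul_centralBinom_succ
    rw [ih] at hrec
    apply mul_left_cancel₀ (Nat.cast_add_one_ne_zero n : (n : K) + 1 ≠ 0)
    rw [hrec, pow_succ, mul_div_assoc', mul_div_assoc', hcb]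
    field_simp
    ring

end Ring

theorem Real.hasSum_centralBinom_div_four_pow_mul_pow {x : ℝ} (hx : |x| < 1) :
    HasSum (fun n ↦ (n.centralBinom / 4 ^ n : ℝ) * x ^ n) (1 / √(1 - x)) := by
  have hmem : x ∈ Metric.eball (0 : ℝ) 1 := by
    rw [Metric.mem_eball, edist_dist, dist_zero_right, Real.norm_eq_abs]
    exact ENNReal.ofReal_lt_one.mpr hx
  have h := (one_div_one_sub_rpow_hasFPowerSeriesOnBall_zero (1 / 2)).hasSum hmem
  simpa only [FormalMultilinearSeries.ofScalars_apply_eq, ← Ring.multichoose_eq,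
    Ring.multichoose_half_eq_centralBinom_div, smul_eq_mul, zero_add, sqrt_eq_rpow] using h

theorem Real.Gamma_natCast_add_three_halves (m : ℕ) :
    Gamma (m + 3 / 2) = (2 * m + 1).factorial * √π / (m.factorial * 2 ^ (2 * m + 1)) := by
  have hdup := Gamma_mul_Gamma_add_half (m + 1)
  have hshift : ((m : ℝ) + 1) + 1 / 2 = m + 3 / 2 := by ring
  have hdouble : 2 * ((m : ℝ) + 1) = ((2 * m + 1 : ℕ) : ℝ) + 1 := by push_cast; ring
  have hpow : (2 : ℝ) ^ (1 - 2 * ((m : ℝ) + 1)) = (2 ^ (2 * m + 1))⁻¹ := by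
    rw [← rpow_natCast, ← rpow_neg two_pos.le]; push_cast; ring_nf
  rw [hshift, hpow, hdouble, Gamma_nat_eq_factorial, Gamma_nat_eq_factorial] at hdup
  rw [eq_div_iff (by positivity), mul_left_comm, ← mul_assoc, hdup]
  field_simp

theorem halfBinom_eq (m : ℕ) :
    halfBinom m = (2 ^ (2 * m + 1)) ^ 2 / (π * (2 * m + 1) * m.centralBinom) := by
  have hnum : Gamma (2 * m + 2) = (2 * m + 1).factorial := by
    rw [← Gamma_nat_eq_factorial]; push_cast; ring_nf
  have hcb : ((2 * m).factorial : ℝ) = m.centralBinom * m.factorial * m.factorial := by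
    exact_mod_cast (Nat.centralBinom_mul_factorial_mul_factorial m).symm
  unfold halfBinom
  rw [hnum, Gamma_natCast_add_three_halves, Nat.factorial_succ]
  push_cast
  rw [hcb]
  field_simp
  rw [sq_sqrt pi_pos.le]

theorem half_integer_central_binomial_series (z : ℝ) (hz : |z| < 1) :
    Real.pi * z / (2 * Real.sqrt (1 - z ^ 2)) =
      ∑' m : ℕ, (2 * z) ^ (2 * m + 1) / (halfBinom m * (2 * m + 1)) := by
  have hz2 : |z ^ 2| < 1 := by rw [abs_pow]; exact pow_lt_one₀ (abs_nonneg z) hz two_ne_zero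
  have hterm (m : ℕ) : (2 * z) ^ (2 * m + 1) / (halfBinom m * (2 * m + 1)) =
      π * z / 2 * (m.centralBinom / 4 ^ m * (z ^ 2) ^ m) := by
    have hfour : (4 : ℝ) ^ m = 2 ^ (2 * m) := by rw [pow_mul]; norm_num
    rw [halfBinom_eq, hfour]
    field_simp
    ring
  rw [tsum_congr hterm, ((hasSum_centralBinom_div_four_pow_mul_pow hz2).mul_left _).tsum_eq]
  ring
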